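/- (Theorem 1(ii), gradient of the cost.) Fix Q, E ∈ ℝ^{n×n} and x_0 ∈ ℝ^n, and define J : ℝ^{N+1} → ℝ by J(δ) = x_0ᵀ S_0(δ) x_0, where S_0(δ) is given by the defining formulas (with Φ and each M_q depending on δ). Then for every δ with nonnegative entries and every i = 0, …, N, the partial derivative ∂J/∂δ_i exists at δ and equals x_{i+1}ᵀ C_i x_{i+1}, where x_{i+1} = Φ(i+1, 0) x_0 and C_i = Q + A_iᵀ S_{i+1} + S_{i+1} A_i are evaluated at δ. -/

import Mathlib

open Matrix

/-- Matrix exponential of a real square matrix. -/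
noncomputable def expM {n : ℕ} (A : Matrix (Fin n) (Fin n) ℝ) : Matrix (Fin n) (Fin n) ℝ :=
  NormedSpace.exp A

/-- Switching times: `tau δ i = ∑_{j<i} δ j`. -/
noncomputable def tau (δ : ℕ → ℝ) (i : ℕ) : ℝ := ∑ j ∈ Finset.range i, δ j

/-- State transition matrix `Φ(l, i) = exp(δ_{l-1} A_{l-1}) ⋯ exp(δ_i A_i)`
(ordered product, larger indices on the left; `Φ(i,i) = 1`). -/
noncomputable def Phi {n : ℕ} (A : ℕ → Matrix (Fin n) (Fin n) ℝ) (δ : ℕ → ℝ)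
    (l i : ℕ) : Matrix (Fin n) (Fin n) ℝ :=
  (((List.range (l - i)).reverse).map (fun p => expM (δ (i + p) • A (i + p)))).prod

/-- `M_q = ∫_0^{δ_q} exp(η A_q)ᵀ Q exp(η A_q) dη`, taken entrywise. -/
noncomputable def Mmat {n : ℕ} (A : ℕ → Matrix (Fin n) (Fin n) ℝ) (δ : ℕ → ℝ)
    (Q : Matrix (Fin n) (Fin n) ℝ) (q : ℕ) : Matrix (Fin n) (Fin n) ℝ :=
  Matrix.of fun k l => ∫ η in (0:ℝ)..δ q, ((expM (η • A q))ᵀ * Q * expM (η • A q)) k l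

/-- `P_a = ∑_{q=a}^N Φ(q,a)ᵀ M_q Φ(q,a)`. -/
noncomputable def Pmat {n : ℕ} (N : ℕ) (A : ℕ → Matrix (Fin n) (Fin n) ℝ) (δ : ℕ → ℝ)
    (Q : Matrix (Fin n) (Fin n) ℝ) (a : ℕ) : Matrix (Fin n) (Fin n) ℝ :=
  ∑ q ∈ Finset.Icc a N, (Phi A δ q a)ᵀ * Mmat A δ Q q * Phi A δ q a

/-- `F_a = Φ(N+1,a)ᵀ E Φ(N+1,a)`. -/
noncomputable def Fmat {n : ℕ} (N : ℕ) (A : ℕ → Matrix (Fin n) (Fin n) ℝ) (δ : ℕ → ℝ)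
    (E : Matrix (Fin n) (Fin n) ℝ) (a : ℕ) : Matrix (Fin n) (Fin n) ℝ :=
  (Phi A δ (N + 1) a)ᵀ * E * Phi A δ (N + 1) a

/-- `S_a = P_a + F_a`. -/
noncomputable def Smat {n : ℕ} (N : ℕ) (A : ℕ → Matrix (Fin n) (Fin n) ℝ) (δ : ℕ → ℝ)
    (Q E : Matrix (Fin n) (Fin n) ℝ) (a : ℕ) : Matrix (Fin n) (Fin n) ℝ :=
  Pmat N A δ Q a + Fmat N A δ E a

/-- A trajectory of the switched system: continuous on `[0, τ_{N+1}]`, starting at `x0`,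
satisfying `x' = A_i x` on each open interval `(τ_i, τ_{i+1})`. -/
def IsTrajectory {n : ℕ} (N : ℕ) (A : ℕ → Matrix (Fin n) (Fin n) ℝ) (δ : ℕ → ℝ)
    (x0 : Fin n → ℝ) (x : ℝ → Fin n → ℝ) : Prop :=
  ContinuousOn x (Set.Icc 0 (tau δ (N + 1))) ∧ x 0 = x0 ∧
    ∀ i ≤ N, ∀ t ∈ Set.Ioo (tau δ i) (tau δ (i + 1)),
      HasDerivAt x ((A i).mulVec (x t)) t

/-!
The backward recursion `S_a = M_a + e^{δ_a A_a}ᵀ S_{a+1} e^{δ_a A_a}` shows that `J` depends on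
`δ_i` only through `x_iᵀ S_i x_i`, where `x_i` and `S_{i+1}` do not involve `δ_i` and
`S_i = ∫_0^{δ_i} e^{η A_i}ᵀ Q e^{η A_i} dη + e^{δ_i A_i}ᵀ S_{i+1} e^{δ_i A_i}`.
By the fundamental theorem of calculus and the product rule,
`∂S_i/∂δ_i = e^{δ_i A_i}ᵀ (Q + A_iᵀ S_{i+1} + S_{i+1} A_i) e^{δ_i A_i}`, and `e^{δ_i A_i} x_i = x_{i+1}`.
-/

section Transition

variable {n : ℕ} (A : ℕ → Matrix (Fin n) (Fin n) ℝ) (δ δ' : ℕ → ℝ)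

lemma Phi_self (i : ℕ) : Phi A δ i i = 1 := by simp [Phi]

lemma Phi_succ {i l : ℕ} (h : i ≤ l) :
    Phi A δ (l + 1) i = expM (δ l • A l) * Phi A δ l i := by
  unfold Phi
  rw [Nat.succ_sub h, List.range_succ, List.reverse_append]
  simp [Nat.add_sub_cancel' h]

lemma Phi_mul {i j l : ℕ} (hij : i ≤ j) (hjl : j ≤ l) :
    Phi A δ l j * Phi A δ j i = Phi A δ l i := by
  induction l, hjl using Nat.le_induction with
  | base => rw [Phi_self, one_mul]
  | succ l hjl ih => rw [Phi_succ A δ hjl, Phi_succ A δ (hij.trans hjl), mul_assoc, ih]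

lemma Phi_congr {a l : ℕ} (h : ∀ p, a ≤ p → p < l → δ p = δ' p) :
    Phi A δ l a = Phi A δ' l a := by
  unfold Phi
  congr 1
  refine List.map_congr_left fun p hp => ?_
  rw [List.mem_reverse, List.mem_range] at hp
  rw [h (a + p) (Nat.le_add_right a p) (by omega)]

end Transition

section Cost

variable {n : ℕ} (N : ℕ) (A : ℕ → Matrix (Fin n) (Fin n) ℝ) (δ δ' : ℕ → ℝ)
  (Q E : Matrix (Fin n) (Fin n) ℝ)

lemma Smat_congr {a : ℕ} (h : ∀ q, a ≤ q → q ≤ N → δ q = δ' q) :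
    Smat N A δ Q E a = Smat N A δ' Q E a := by
  have hPhi : ∀ l ≤ N + 1, Phi A δ l a = Phi A δ' l a := fun l hl =>
    Phi_congr A δ δ' fun p hap hpl => h p hap (by omega)
  unfold Smat Pmat Fmat Mmat
  rw [hPhi (N + 1) le_rfl]
  congr 1
  refine Finset.sum_congr rfl fun q hq => ?_
  obtain ⟨haq, hqN⟩ := Finset.mem_Icc.1 hq
  rw [hPhi q (by omega), h q haq hqN]

lemma transpose_Phi_mul_mul_Phi {a b q : ℕ} (hab : a ≤ b) (hbq : b ≤ q)
    (X : Matrix (Fin n) (Fin n) ℝ) :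
    (Phi A δ q a)ᵀ * X * Phi A δ q a
      = (Phi A δ b a)ᵀ * ((Phi A δ q b)ᵀ * X * Phi A δ q b) * Phi A δ b a := by
  rw [← Phi_mul A δ hab hbq, transpose_mul]
  simp only [Matrix.mul_assoc]

lemma Smat_eq_sum_add {a b : ℕ} (hab : a ≤ b) (hb : b ≤ N + 1) :
    Smat N A δ Q E a = ∑ q ∈ Finset.Ico a b, (Phi A δ q a)ᵀ * Mmat A δ Q q * Phi A δ q a
      + (Phi A δ b a)ᵀ * Smat N A δ Q E b * Phi A δ b a := by
  simp only [Smat, Pmat, Fmat, ← Finset.Ico_add_one_right_eq_Icc]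
  rw [← Finset.sum_Ico_consecutive _ hab hb, transpose_Phi_mul_mul_Phi A δ hab hb,
    Finset.sum_congr rfl fun q hq =>
      transpose_Phi_mul_mul_Phi A δ hab (Finset.mem_Ico.1 hq).1 (Mmat A δ Q q),
    ← Finset.sum_mul, ← Finset.mul_sum, Matrix.mul_add, Matrix.add_mul, add_assoc]

lemma Smat_eq_sum_add_of_eqOn {a b : ℕ} (hab : a ≤ b) (hb : b ≤ N + 1)
    (h : ∀ q, a ≤ q → q < b → δ' q = δ q) :
    Smat N A δ' Q E a = ∑ q ∈ Finset.Ico a b, (Phi A δ q a)ᵀ * Mmat A δ Q q * Phi A δ q a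
      + (Phi A δ b a)ᵀ * Smat N A δ' Q E b * Phi A δ b a := by
  rw [Smat_eq_sum_add N A δ' Q E hab hb, Phi_congr A δ' δ h]
  congr 1
  refine Finset.sum_congr rfl fun q hq => ?_
  obtain ⟨haq, hqb⟩ := Finset.mem_Ico.1 hq
  rw [Phi_congr A δ' δ fun p hap hpq => h p hap (hpq.trans hqb), Mmat, Mmat, h q haq hqb]

lemma Smat_eq_Mmat_add {a : ℕ} (ha : a ≤ N) :
    Smat N A δ Q E a
      = Mmat A δ Q a + (expM (δ a • A a))ᵀ * Smat N A δ Q E (a + 1) * expM (δ a • A a) := by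
  rw [Smat_eq_sum_add N A δ Q E (Nat.le_succ a) (by omega), Nat.Ico_succ_singleton,
    Finset.sum_singleton, Phi_succ A δ le_rfl, Phi_self]
  simp

end Cost

noncomputable def expSandwich {n : ℕ} (B M : Matrix (Fin n) (Fin n) ℝ) (η : ℝ) :
    Matrix (Fin n) (Fin n) ℝ :=
  (expM (η • B))ᵀ * M * expM (η • B)

lemma expSandwich_add {n : ℕ} (B M M' : Matrix (Fin n) (Fin n) ℝ) (η : ℝ) :
    expSandwich B (M + M') η = expSandwich B M η + expSandwich B M' η := by
  simp only [expSandwich, Matrix.mul_add, Matrix.add_mul]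

lemma dotProduct_transpose_mul_mul_mulVec {n : ℕ} (B M : Matrix (Fin n) (Fin n) ℝ)
    (v w : Fin n → ℝ) : v ⬝ᵥ (Bᵀ * M * B) *ᵥ w = (B *ᵥ v) ⬝ᵥ M *ᵥ (B *ᵥ w) := by
  rw [← mulVec_mulVec, ← mulVec_mulVec, dotProduct_mulVec v, vecMul_transpose]

section Calculus

-- Matrices carry no global norm; any normed-algebra structure would serve here.
attribute [local instance] Matrix.linftyOpNormedRing Matrix.linftyOpNormedAlgebra

variable {n : ℕ}

lemma hasDerivAt_expSandwich (B M : Matrix (Fin n) (Fin n) ℝ) (t : ℝ) :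
    HasDerivAt (expSandwich B M) (expSandwich B (Bᵀ * M + M * B) t) t := by
  have hexp : ∀ η : ℝ, (expM (η • B))ᵀ = expM (η • Bᵀ) := fun η => by
    rw [expM, expM, ← Matrix.exp_transpose, transpose_smul]
  have h := ((hasDerivAt_exp_smul_const Bᵀ t).mul_const M).mul (hasDerivAt_exp_smul_const' B t)
  have hf : expSandwich B M = fun η => expM (η • Bᵀ) * M * expM (η • B) :=
    funext fun η => by rw [expSandwich, hexp]
  rw [hf]
  refine h.congr_deriv ?_
  rw [expSandwich, hexp]
  simp only [expM, Matrix.mul_add, Matrix.add_mul, Matrix.mul_assoc]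
  rfl

lemma continuous_expSandwich (B M : Matrix (Fin n) (Fin n) ℝ) : Continuous (expSandwich B M) :=
  continuous_iff_continuousAt.2 fun t => (hasDerivAt_expSandwich B M t).continuousAt

lemma Mmat_eq_integral (A : ℕ → Matrix (Fin n) (Fin n) ℝ) (δ : ℕ → ℝ)
    (Q : Matrix (Fin n) (Fin n) ℝ) (q : ℕ) :
    Mmat A δ Q q = ∫ η in (0 : ℝ)..δ q, expSandwich (A q) Q η := by
  ext k l
  rw [Mmat, of_apply]
  exact (entryLinearMap ℝ ℝ k l).toContinuousLinearMap.intervalIntegral_comp_comm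
    ((continuous_expSandwich (A q) Q).intervalIntegrable 0 (δ q))

lemma hasDerivAt_Smat_update {N i : ℕ} (hi : i ≤ N) (A : ℕ → Matrix (Fin n) (Fin n) ℝ)
    (δ : ℕ → ℝ) (Q E : Matrix (Fin n) (Fin n) ℝ) :
    HasDerivAt (fun s => Smat N A (Function.update δ i s) Q E i)
      (expSandwich (A i)
        (Q + (A i)ᵀ * Smat N A δ Q E (i + 1) + Smat N A δ Q E (i + 1) * A i) (δ i)) (δ i) := by
  set S := Smat N A δ Q E (i + 1)
  have hS : ∀ s, Smat N A (Function.update δ i s) Q E i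
      = (∫ η in (0 : ℝ)..s, expSandwich (A i) Q η) + expSandwich (A i) S s := fun s => by
    rw [Smat_eq_Mmat_add N A _ Q E hi, Mmat_eq_integral, Function.update_self,
      Smat_congr N A _ δ Q E fun q hq _ => Function.update_of_ne (by omega) s δ]
    rfl
  rw [funext hS, add_assoc, expSandwich_add]
  exact ((continuous_expSandwich (A i) Q).integral_hasStrictDerivAt 0 (δ i)).hasDerivAt.add
    (hasDerivAt_expSandwich (A i) S (δ i))

lemma HasDerivAt.dotProduct_mulVec {S : ℝ → Matrix (Fin n) (Fin n) ℝ}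
    {S' : Matrix (Fin n) (Fin n) ℝ} {t : ℝ} (h : HasDerivAt S S' t) (v w : Fin n → ℝ) :
    HasDerivAt (fun s => v ⬝ᵥ S s *ᵥ w) (v ⬝ᵥ S' *ᵥ w) t := by
  let L : Matrix (Fin n) (Fin n) ℝ →ₗ[ℝ] ℝ :=
    { toFun := fun M => v ⬝ᵥ M *ᵥ w
      map_add' := fun M M' => by simp only [add_mulVec, dotProduct_add]
      map_smul' := fun c M => by simp only [smul_mulVec, dotProduct_smul, RingHom.id_apply] }
  exact L.toContinuousLinearMap.hasFDerivAt.comp_hasDerivAt t h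

end Calculus

theorem stmt9_general {n N : ℕ} (A : ℕ → Matrix (Fin n) (Fin n) ℝ) (δ : ℕ → ℝ)
    (Q E : Matrix (Fin n) (Fin n) ℝ) (x0 : Fin n → ℝ)
    (i : ℕ) (hiN : i ≤ N) :
    HasDerivAt
      (fun s : ℝ => x0 ⬝ᵥ (Smat N A (Function.update δ i s) Q E 0).mulVec x0)
      (((Phi A δ (i + 1) 0).mulVec x0) ⬝ᵥ
        (Q + (A i)ᵀ * Smat N A δ Q E (i + 1) + Smat N A δ Q E (i + 1) * A i).mulVec
          ((Phi A δ (i + 1) 0).mulVec x0))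
      (δ i) := by
  set P := ∑ q ∈ Finset.range i, (Phi A δ q 0)ᵀ * Mmat A δ Q q * Phi A δ q 0
  set x := Phi A δ i 0 *ᵥ x0
  have hcost : ∀ s, x0 ⬝ᵥ Smat N A (Function.update δ i s) Q E 0 *ᵥ x0
      = x0 ⬝ᵥ P *ᵥ x0 + x ⬝ᵥ Smat N A (Function.update δ i s) Q E i *ᵥ x := fun s => by
    rw [Smat_eq_sum_add_of_eqOn N A δ _ Q E (Nat.zero_le i) (by omega)
      fun q _ hq => Function.update_of_ne hq.ne s δ, add_mulVec, dotProduct_add,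
      dotProduct_transpose_mul_mul_mulVec, ← Finset.range_eq_Ico]
  rw [funext hcost]
  refine (((hasDerivAt_Smat_update hiN A δ Q E).dotProduct_mulVec x x).const_add _).congr_deriv ?_
  rw [expSandwich, dotProduct_transpose_mul_mul_mulVec, Phi_succ A δ (Nat.zero_le i),
    ← mulVec_mulVec]

/-- Theorem 1(ii): the gradient of `J(δ) = x_0ᵀ S_0(δ) x_0` satisfies
`∂J/∂δ_i = x_{i+1}ᵀ C_i x_{i+1}` with `C_i = Q + A_iᵀ S_{i+1} + S_{i+1} A_i` and
`x_{i+1} = Φ(i+1,0) x_0`. -/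
theorem stmt9 {n N : ℕ} (A : ℕ → Matrix (Fin n) (Fin n) ℝ) (δ : ℕ → ℝ)
    (hδ : ∀ q ≤ N, 0 ≤ δ q) (Q E : Matrix (Fin n) (Fin n) ℝ) (x0 : Fin n → ℝ)
    (i : ℕ) (hiN : i ≤ N) :
    HasDerivAt
      (fun s : ℝ => x0 ⬝ᵥ (Smat N A (Function.update δ i s) Q E 0).mulVec x0)
      (((Phi A δ (i + 1) 0).mulVec x0) ⬝ᵥ
        (Q + (A i)ᵀ * Smat N A δ Q E (i + 1) + Smat N A δ Q E (i + 1) * A i).mulVec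
          ((Phi A δ (i + 1) 0).mulVec x0))
      (δ i) :=
  stmt9_general A δ Q E x0 i hiN
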